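/- Let G₁, …, G_p (p ≥ 3) be nonempty connected interval graphs and let G be the graph obtained from the disjoint union G₁ ⊔ ⋯ ⊔ G_p by adding one new vertex w adjacent to all of their vertices. Then every interval representation R of G satisfies ν(R) ≥ 1 + min over pairs of distinct indices s ≠ t of max{ν(G_i) : i ∉ {s, t}}. -/

import Mathlib

open Set

/-- An interval representation of a simple graph `G`: each vertex `v` gets a nonempty
closed interval `[l v, r v] ⊆ ℝ`, and two distinct vertices are adjacent iff their
intervals intersect. -/
structure IntervalRep {V : Type*} (G : SimpleGraph V) where
  l : V → ℝ
  r : V → ℝ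
  le : ∀ v, l v ≤ r v
  adj_iff : ∀ u v : V, u ≠ v →
    (G.Adj u v ↔ (Icc (l u) (r u) ∩ Icc (l v) (r v)).Nonempty)

namespace IntervalRep

variable {V : Type*} {G : SimpleGraph V}

/-- The interval of a vertex. -/
def itv (R : IntervalRep G) (v : V) : Set ℝ := Icc (R.l v) (R.r v)

/-- The nesting `ν(R)`: the maximum length of a chain of strictly nested vertex intervals. -/
noncomputable def nesting (R : IntervalRep G) : ℕ :=
  sSup {k : ℕ | ∃ f : Fin k → V, ∀ i j : Fin k, i < j → R.itv (f i) ⊂ R.itv (f j)}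

/-- `ν_R(x)`: the maximum length of a chain of strictly nested vertex intervals whose
outermost interval is `I(x)` (counting `x` itself). -/
noncomputable def nuAt (R : IntervalRep G) (x : V) : ℕ :=
  sSup {k : ℕ | ∃ f : Fin k → V,
    (∀ i j : Fin k, i < j → R.itv (f i) ⊂ R.itv (f j)) ∧
    ∃ h : 0 < k, f ⟨k - 1, by omega⟩ = x}

end IntervalRep

/-- A graph is an interval graph if it admits an interval representation. -/
def IsIntervalGraph {V : Type*} (G : SimpleGraph V) : Prop := Nonempty (IntervalRep G)

/-- The nesting number `ν(G)`: the minimum nesting over all interval representations. -/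
noncomputable def nu {V : Type*} (G : SimpleGraph V) : ℕ :=
  sInf {n : ℕ | ∃ R : IntervalRep G, R.nesting = n}

/-- `G_α`: add vertices `u, a₁, a₂, b₁, b₂` (coded as `0,1,2,3,4`), with `u` adjacent to all
of `G` and to `a₁, b₁`; `a₁ ~ a₂` and `b₁ ~ b₂`. -/
def Galpha {V : Type*} (G : SimpleGraph V) : SimpleGraph (V ⊕ Fin 5) :=
  SimpleGraph.fromRel fun x y =>
    match x, y with
    | Sum.inl a, Sum.inl b => G.Adj a b
    | Sum.inl _, Sum.inr i => i = 0
    | Sum.inr _, Sum.inl _ => False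
    | Sum.inr i, Sum.inr j =>
        i = 0 ∧ j = 1 ∨ i = 1 ∧ j = 2 ∨ i = 0 ∧ j = 3 ∨ i = 3 ∧ j = 4

/-- `G_β`: add vertices `u, a₁, a₂` (coded as `0,1,2`), with `u` adjacent to all of `G`
and to `a₁`; `a₁ ~ a₂`. -/
def Gbeta {V : Type*} (G : SimpleGraph V) : SimpleGraph (V ⊕ Fin 3) :=
  SimpleGraph.fromRel fun x y =>
    match x, y with
    | Sum.inl a, Sum.inl b => G.Adj a b
    | Sum.inl _, Sum.inr i => i = 0
    | Sum.inr _, Sum.inl _ => False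
    | Sum.inr i, Sum.inr j => i = 0 ∧ j = 1 ∨ i = 1 ∧ j = 2

/-- `G_γ`: add vertices `u, v, a₁, a₂, b₁, b₂` (coded as `0,1,2,3,4,5`), with `u ~ v`, both
adjacent to all of `G`; `u ~ a₁`, `a₁ ~ a₂`, `v ~ b₁`, `b₁ ~ b₂`. -/
def Ggamma {V : Type*} (G : SimpleGraph V) : SimpleGraph (V ⊕ Fin 6) :=
  SimpleGraph.fromRel fun x y =>
    match x, y with
    | Sum.inl a, Sum.inl b => G.Adj a b
    | Sum.inl _, Sum.inr i => i = 0 ∨ i = 1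
    | Sum.inr _, Sum.inl _ => False
    | Sum.inr i, Sum.inr j =>
        i = 0 ∧ j = 1 ∨ i = 0 ∧ j = 2 ∨ i = 2 ∧ j = 3 ∨ i = 1 ∧ j = 4 ∨ i = 4 ∧ j = 5

/-- The disjoint union of a family of graphs, on the sigma type of their vertex sets. -/
def sigmaGraph {p : ℕ} {V : Fin p → Type*} (G : ∀ i, SimpleGraph (V i)) :
    SimpleGraph (Σ i, V i) :=
  SimpleGraph.fromRel fun x y => ∃ h : x.1 = y.1, (G y.1).Adj (h ▸ x.2) y.2

/-- The graph obtained from `H` by adding one new vertex adjacent to every vertex of `H`. -/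
def joinVertex {W : Type*} (H : SimpleGraph W) : SimpleGraph (W ⊕ Unit) :=
  SimpleGraph.fromRel fun x y =>
    match x, y with
    | Sum.inl a, Sum.inl b => H.Adj a b
    | Sum.inl _, Sum.inr _ => True
    | _, _ => False

/-! The endpoints of the interval `I(w)` of the universal vertex each lie in intervals of at most
one component, because intervals of different components are disjoint. Hence there are indices
`s ≠ t` such that every vertex interval of a component `G_i` with `i ∉ {s, t}` meets `I(w)` but
contains neither endpoint, so it lies strictly inside `I(w)`. Restricting `R` to the component
`G_i` with the largest `ν(G_i)` among those and appending `I(w)` to a longest chain of the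
restriction gives a chain of length at least `ν(G_i) + 1`. -/

theorem Set.Icc_ssubset_Icc_of_inter_nonempty_of_notMem {α : Type*} [LinearOrder α]
    {a b c d : α} (h : (Icc c d ∩ Icc a b).Nonempty) (ha : a ∉ Icc c d) (hb : b ∉ Icc c d) :
    Icc c d ⊂ Icc a b := by
  obtain ⟨x, ⟨hcx, hxd⟩, hax, hxb⟩ := h
  have hac : a < c := by
    by_contra! hca
    exact ha ⟨hca, hax.trans hxd⟩
  have hdb : d < b := by
    by_contra! hbd
    exact hb ⟨hcx.trans hxb, hbd⟩
  exact Icc_ssubset_Icc_left (hax.trans hxb) hac hdb.le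

theorem Set.Subsingleton.exists_ne_union_subset_pair {α : Type*} [Nontrivial α] {A B : Set α}
    (hA : A.Subsingleton) (hB : B.Subsingleton) : ∃ s t, s ≠ t ∧ A ∪ B ⊆ {s, t} := by
  have subset_singleton : ∀ S : Set α, S.Subsingleton → ∃ a, S ⊆ {a} := by
    intro S hS
    rcases hS.eq_empty_or_singleton with rfl | ⟨a, rfl⟩
    · exact ⟨Classical.arbitrary α, empty_subset _⟩
    · exact ⟨a, subset_rfl⟩
  obtain ⟨a, ha⟩ := subset_singleton A hA
  obtain ⟨b, hb⟩ := subset_singleton B hB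
  by_cases hab : a = b
  · subst hab
    obtain ⟨c, hc⟩ := exists_ne a
    exact ⟨a, c, hc.symm, union_subset (ha.trans (by simp)) (hb.trans (by simp))⟩
  · exact ⟨a, b, hab, (union_subset_union ha hb).trans (by rw [singleton_union])⟩

namespace IntervalRep

variable {V W : Type*} {G : SimpleGraph V} {H : SimpleGraph W}

def IsNestedChain (R : IntervalRep G) {k : ℕ} (f : Fin k → V) : Prop :=
  ∀ i j : Fin k, i < j → R.itv (f i) ⊂ R.itv (f j)

theorem IsNestedChain.injective {R : IntervalRep G} {k : ℕ} {f : Fin k → V}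
    (hf : R.IsNestedChain f) : Function.Injective f := by
  intro i j hij
  by_contra hne
  rcases lt_or_gt_of_ne hne with h | h
  · exact (hf i j h).ne (congrArg R.itv hij)
  · exact (hf j i h).ne (congrArg R.itv hij.symm)

theorem IsNestedChain.snoc {R : IntervalRep G} {k : ℕ} {f : Fin k → V} (hf : R.IsNestedChain f)
    {x : V} (hx : ∀ i, R.itv (f i) ⊂ R.itv x) :
    R.IsNestedChain (Fin.snoc f x : Fin (k + 1) → V) := by
  intro i j hij
  induction j using Fin.lastCases with
  | last =>
    obtain ⟨i, rfl⟩ := Fin.exists_castSucc_eq.2 (Fin.ne_last_of_lt hij)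
    simpa using hx i
  | cast j =>
    obtain ⟨i, rfl⟩ :=
      Fin.exists_castSucc_eq.2 (Fin.ne_last_of_lt (hij.trans (Fin.castSucc_lt_last j)))
    simpa using hf i j (Fin.castSucc_lt_castSucc_iff.1 hij)

theorem bddAbove_isNestedChain_length [Finite V] (R : IntervalRep G) :
    BddAbove {k : ℕ | ∃ f : Fin k → V, R.IsNestedChain f} := by
  refine ⟨Nat.card V, fun k ⟨f, hf⟩ => ?_⟩
  simpa using Nat.card_le_card_of_injective f hf.injective

theorem exists_isNestedChain_nesting [Finite V] (R : IntervalRep G) :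
    ∃ f : Fin R.nesting → V, R.IsNestedChain f :=
  Nat.sSup_mem (s := {k : ℕ | ∃ f : Fin k → V, R.IsNestedChain f})
    ⟨0, Fin.elim0, fun i => i.elim0⟩ R.bddAbove_isNestedChain_length

theorem le_nesting [Finite V] (R : IntervalRep G) {k : ℕ} {f : Fin k → V}
    (hf : R.IsNestedChain f) : k ≤ R.nesting :=
  le_csSup R.bddAbove_isNestedChain_length ⟨f, hf⟩

theorem nu_le_nesting (R : IntervalRep G) : nu G ≤ R.nesting :=
  Nat.sInf_le ⟨R, rfl⟩

def comap (R : IntervalRep G) (f : H ↪g G) : IntervalRep H where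
  l v := R.l (f v)
  r v := R.r (f v)
  le v := R.le (f v)
  adj_iff u v huv := by rw [← f.map_adj_iff, R.adj_iff _ _ (f.injective.ne huv)]

theorem nesting_comap_add_one_le [Finite V] [Finite W] (R : IntervalRep G) (f : H ↪g G)
    {x : V} (hx : ∀ v, R.itv (f v) ⊂ R.itv x) : (R.comap f).nesting + 1 ≤ R.nesting := by
  obtain ⟨c, hc⟩ := (R.comap f).exists_isNestedChain_nesting
  exact R.le_nesting (IsNestedChain.snoc (f := f ∘ c) hc fun i => hx (c i))

theorem adj_of_mem_itv (R : IntervalRep G) {u v : V} (huv : u ≠ v) {y : ℝ} (hu : y ∈ R.itv u)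
    (hv : y ∈ R.itv v) : G.Adj u v :=
  (R.adj_iff u v huv).2 ⟨y, hu, hv⟩

theorem itv_ssubset_of_adj (R : IntervalRep G) {u x : V} (h : G.Adj u x)
    (hl : R.l x ∉ R.itv u) (hr : R.r x ∉ R.itv u) : R.itv u ⊂ R.itv x :=
  Icc_ssubset_Icc_of_inter_nonempty_of_notMem ((R.adj_iff u x h.ne).1 h) hl hr

end IntervalRep

section JoinVertex

variable {W : Type*} (H : SimpleGraph W)

theorem joinVertex_adj_inl {a b : W} : (joinVertex H).Adj (.inl a) (.inl b) ↔ H.Adj a b := by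
  simp only [joinVertex, SimpleGraph.fromRel_adj, ne_eq, Sum.inl.injEq]
  exact ⟨fun ⟨_, h⟩ => h.elim id fun h => h.symm, fun h => ⟨h.ne, .inl h⟩⟩

theorem joinVertex_adj_inl_inr (a : W) : (joinVertex H).Adj (.inl a) (.inr ()) := by
  simp [joinVertex]

def embeddingJoinVertex : H ↪g joinVertex H :=
  ⟨Function.Embedding.inl, joinVertex_adj_inl H⟩

end JoinVertex

section SigmaGraph

variable {p : ℕ} {V : Fin p → Type*} (G : ∀ i, SimpleGraph (V i))

theorem sigmaGraph_adj_mk {i : Fin p} {u v : V i} :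
    (sigmaGraph G).Adj ⟨i, u⟩ ⟨i, v⟩ ↔ (G i).Adj u v := by
  simp only [sigmaGraph, SimpleGraph.fromRel_adj]
  constructor
  · rintro ⟨-, ⟨-, h⟩ | ⟨-, h⟩⟩
    · exact h
    · exact h.symm
  · intro h
    exact ⟨by simp [h.ne], .inl ⟨trivial, h⟩⟩

theorem sigmaGraph_adj_fst_eq {x y : Σ i, V i} (h : (sigmaGraph G).Adj x y) : x.1 = y.1 := by
  simp only [sigmaGraph, SimpleGraph.fromRel_adj] at h
  obtain ⟨-, ⟨hxy, -⟩ | ⟨hyx, -⟩⟩ := h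
  · exact hxy
  · exact hyx.symm

def embeddingSigmaGraph (i : Fin p) : G i ↪g sigmaGraph G :=
  ⟨Function.Embedding.sigmaMk i, sigmaGraph_adj_mk G⟩

end SigmaGraph

namespace IntervalRep

variable {p : ℕ} {V : Fin p → Type*} {G : ∀ i, SimpleGraph (V i)}

theorem subsingleton_setOf_exists_mem_itv (R : IntervalRep (joinVertex (sigmaGraph G)))
    (y : ℝ) : {i | ∃ v : V i, y ∈ R.itv (.inl ⟨i, v⟩)}.Subsingleton := by
  rintro i ⟨u, hu⟩ j ⟨v, hv⟩
  by_contra hij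
  have hne : (.inl ⟨i, u⟩ : (Σ i, V i) ⊕ Unit) ≠ .inl ⟨j, v⟩ :=
    fun h => hij (congrArg Sigma.fst (Sum.inl_injective h))
  exact hij (sigmaGraph_adj_fst_eq G ((joinVertex_adj_inl _).1 (R.adj_of_mem_itv hne hu hv)))

theorem exists_ne_forall_itv_inl_ssubset_itv_inr (hp : 2 ≤ p)
    (R : IntervalRep (joinVertex (sigmaGraph G))) :
    ∃ s t : Fin p, s ≠ t ∧
      ∀ i, i ≠ s → i ≠ t → ∀ v : V i, R.itv (.inl ⟨i, v⟩) ⊂ R.itv (.inr ()) := by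
  have : Nontrivial (Fin p) := Fin.nontrivial_iff_two_le.2 hp
  obtain ⟨s, t, hst, hcover⟩ :=
    (R.subsingleton_setOf_exists_mem_itv (R.l (.inr ()))).exists_ne_union_subset_pair
      (R.subsingleton_setOf_exists_mem_itv (R.r (.inr ())))
  refine ⟨s, t, hst, fun i his hit v =>
    R.itv_ssubset_of_adj (joinVertex_adj_inl_inr _ _) (fun hl => ?_) (fun hr => ?_)⟩
  · exact (hcover (.inl ⟨v, hl⟩) : i = s ∨ i = t).elim his hit
  · exact (hcover (.inr ⟨v, hr⟩) : i = s ∨ i = t).elim his hit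

end IntervalRep

theorem stmt_16_general {p : ℕ} (hp : 3 ≤ p) {V : Fin p → Type*} [∀ i, Fintype (V i)]
    (G : ∀ i, SimpleGraph (V i))
    (R : IntervalRep (joinVertex (sigmaGraph G))) :
    1 + sInf {m : ℕ | ∃ s t : Fin p, s ≠ t ∧
        m = (Finset.univ \ {s, t}).sup fun i => nu (G i)} ≤ R.nesting := by
  obtain ⟨s, t, hst, hinside⟩ := R.exists_ne_forall_itv_inl_ssubset_itv_inr (by omega)
  obtain ⟨k, hks, hkt⟩ := Fin.exists_ne_and_ne_of_two_lt s t (by omega)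
  obtain ⟨i, hi, hsup⟩ := Finset.exists_mem_eq_sup (Finset.univ \ {s, t})
    ⟨k, by simp [hks, hkt]⟩ fun i => nu (G i)
  have his : i ≠ s := by rintro rfl; simp at hi
  have hit : i ≠ t := by rintro rfl; simp at hi
  let f := (embeddingJoinVertex _).comp (embeddingSigmaGraph G i)
  calc 1 + sInf _ ≤ 1 + nu (G i) := by gcongr; exact Nat.sInf_le ⟨s, t, hst, hsup.symm⟩
    _ ≤ (R.comap f).nesting + 1 := by rw [add_comm]; gcongr; exact (R.comap f).nu_le_nesting
    _ ≤ R.nesting := R.nesting_comap_add_one_le f (hinside i his hit)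

/-- for nonempty connected interval graphs `G₁, …, G_p` (`p ≥ 3`) and `G`
their disjoint union plus a universal vertex `w`, every representation `R` of `G` satisfies
`ν(R) ≥ 1 + min_{s ≠ t} max{ν(G_i) : i ∉ {s,t}}`. -/
theorem stmt_16 {p : ℕ} (hp : 3 ≤ p) {V : Fin p → Type*} [∀ i, Fintype (V i)]
    [∀ i, Nonempty (V i)] (G : ∀ i, SimpleGraph (V i))
    (hconn : ∀ i, (G i).Connected) (hG : ∀ i, IsIntervalGraph (G i))
    (R : IntervalRep (joinVertex (sigmaGraph G))) :
    1 + sInf {m : ℕ | ∃ s t : Fin p, s ≠ t ∧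
        m = (Finset.univ \ {s, t}).sup fun i => nu (G i)} ≤ R.nesting :=
  stmt_16_general hp G R
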